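/- Every lattice has a Minkowski reduced basis: for every positive definite real symmetric N×N matrix G there exists a unimodular integer matrix Z such that ZᵀGZ belongs to the Minkowski reduction region M. -/

import Mathlib

open Matrix

/-- The quadratic form `vᵀ G v` evaluated at an integer vector `v`. -/
def intQuadForm {N : ℕ} (G : Matrix (Fin N) (Fin N) ℝ) (v : Fin N → ℤ) : ℝ :=
  (fun i => (v i : ℝ)) ⬝ᵥ G.mulVec fun i => (v i : ℝ)

/-- The gcd condition `gcd(v_i, …, v_N) = 1`. -/
def GcdTailOne {N : ℕ} (i : Fin N) (v : Fin N → ℤ) : Prop :=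
  Finset.gcd (Finset.Ici i) v = 1

/-- The Minkowski reduction region `M`. -/
def MinkowskiRegion (N : ℕ) : Set (Matrix (Fin N) (Fin N) ℝ) :=
  {G | G.IsSymm ∧
    (∀ i : Fin N, ∀ v : Fin N → ℤ, GcdTailOne i v → G i i ≤ intQuadForm G v) ∧
    (∀ i : Fin N, ∀ h : (i : ℕ) + 1 < N, 0 ≤ G i ⟨(i : ℕ) + 1, h⟩)}

/-- A unimodular matrix: integer entries and determinant `±1`. -/
def IsUnimodular {N : ℕ} (Z : Matrix (Fin N) (Fin N) ℤ) : Prop :=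
  Z.det = 1 ∨ Z.det = -1

/-! Choose the columns of `Z` greedily, as Minkowski did: the `i`-th column minimises `vᵀ G v`
among the `i`-th columns of unimodular matrices sharing the previous columns. Such a choice exists
because the lexicographic order on the column values is well founded, a positive definite form
taking only finitely many values below any bound on `ℤ^N`. If `gcd (v_i, …, v_N) = 1`, Euclid's
algorithm on these entries yields a unimodular `U` whose first columns are `e_1, …, e_{i-1}` and
whose `i`-th column is `v`; then `Z U` competes with `Z`, which gives `(ZᵀGZ)_{ii} ≤ vᵀ (ZᵀGZ) v`.
Changing the signs of columns preserves the greedy property, and a suitable choice of signs makes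
the superdiagonal of `ZᵀGZ` nonnegative. -/

open Finset

theorem Matrix.PosDef.exists_pos_mul_sq_norm_le {n : Type*} [Fintype n] {G : Matrix n n ℝ}
    (hG : G.PosDef) : ∃ c > 0, ∀ x : n → ℝ, c * ‖x‖ ^ 2 ≤ x ⬝ᵥ G *ᵥ x := by
  rcases isEmpty_or_nonempty n with hn | hn
  · exact ⟨1, one_pos, fun x => by simp [Subsingleton.elim x 0]⟩
  have hcont : Continuous fun x : n → ℝ => x ⬝ᵥ G *ᵥ x :=
    continuous_id.dotProduct (continuous_const.matrix_mulVec continuous_id)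
  obtain ⟨x₀, hx₀, hmin⟩ := (isCompact_sphere (0 : n → ℝ) 1).exists_isMinOn
    (NormedSpace.sphere_nonempty.2 zero_le_one) hcont.continuousOn
  have hpos : 0 < x₀ ⬝ᵥ G *ᵥ x₀ := by
    simpa using hG.dotProduct_mulVec_pos (ne_zero_of_mem_unit_sphere ⟨x₀, hx₀⟩)
  refine ⟨x₀ ⬝ᵥ G *ᵥ x₀, hpos, fun x => ?_⟩
  rcases eq_or_ne x 0 with rfl | hx
  · simp
  have hx' : 0 < ‖x‖ := norm_pos_iff.2 hx
  have hy : ‖x‖⁻¹ • x ∈ Metric.sphere (0 : n → ℝ) 1 := by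
    simp [norm_smul, hx'.ne']
  have hle : x₀ ⬝ᵥ G *ᵥ x₀ ≤ ‖x‖⁻¹ * (‖x‖⁻¹ * (x ⬝ᵥ G *ᵥ x)) := by
    simpa only [Set.mem_ofPred_eq, mulVec_smul, dotProduct_smul, smul_dotProduct, smul_eq_mul]
      using hmin hy
  calc x₀ ⬝ᵥ G *ᵥ x₀ * ‖x‖ ^ 2 ≤ ‖x‖⁻¹ * (‖x‖⁻¹ * (x ⬝ᵥ G *ᵥ x)) * ‖x‖ ^ 2 := by gcongr
    _ = x ⬝ᵥ G *ᵥ x := by field_simp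

theorem wellFounded_invImage_of_finite_setOf_le {α β : Type*} [LinearOrder β] {f : α → β}
    (hf : ∀ b, {a | f a ≤ b}.Finite) : WellFounded (InvImage (· < ·) f) := by
  rw [wellFounded_iff_isEmpty_descending_chain]
  refine ⟨fun ⟨g, hg⟩ => ?_⟩
  have hanti : StrictAnti (f ∘ g) := strictAnti_nat_of_succ_lt hg
  exact Set.infinite_range_of_injective hanti.injective.of_comp
    ((hf (f (g 0))).subset (Set.range_subset_iff.2 fun n => hanti.antitone (Nat.zero_le n)))

namespace Matrix

variable {n R : Type*} [Fintype n] [DecidableEq n] [CommRing R]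

theorem transvection_mulVec (k l : n) (c : R) (v : n → R) :
    transvection k l c *ᵥ v = Function.update v k (v k + c * v l) := by
  ext r
  rcases eq_or_ne r k with rfl | hr
  · simp [transvection, add_mulVec, single_mulVec]
  · simp [transvection, add_mulVec, single_mulVec, hr]

theorem col_mul_diagonal (M : Matrix n n R) (d : n → R) (j : n) :
    (M * diagonal d).col j = d j • M.col j := by
  ext r
  simp [col, mul_comm]

end Matrix

variable {N : ℕ}

theorem isUnimodular_iff_isUnit_det {Z : Matrix (Fin N) (Fin N) ℤ} :
    IsUnimodular Z ↔ IsUnit Z.det :=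
  Int.isUnit_iff.symm

theorem IsUnimodular.mul {A B : Matrix (Fin N) (Fin N) ℤ} (hA : IsUnimodular A)
    (hB : IsUnimodular B) : IsUnimodular (A * B) := by
  rw [isUnimodular_iff_isUnit_det, det_mul]
  exact (isUnimodular_iff_isUnit_det.1 hA).mul (isUnimodular_iff_isUnit_det.1 hB)

theorem isUnimodular_diagonal_units (ε : Fin N → ℤˣ) :
    IsUnimodular (diagonal fun i => (ε i : ℤ)) := by
  rw [isUnimodular_iff_isUnit_det, det_diagonal, ← Units.coe_prod]
  exact Units.isUnit _

section HeadOrbit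

variable (i : Fin N)

def headStabilizer : Submonoid (Matrix (Fin N) (Fin N) ℤ) where
  carrier := {E | IsUnimodular E ∧ ∀ j < i, E *ᵥ Pi.single j 1 = Pi.single j 1}
  mul_mem' {A B} hA hB :=
    ⟨hA.1.mul hB.1, fun j hj => by rw [← mulVec_mulVec, hB.2 j hj, hA.2 j hj]⟩
  one_mem' := ⟨Or.inl det_one, fun j _ => one_mulVec _⟩

def headOrbit : Set (Fin N → ℤ) :=
  {v | ∃ U ∈ headStabilizer i, U *ᵥ Pi.single i 1 = v}

variable {i}

theorem mulVec_mem_headOrbit {E : Matrix (Fin N) (Fin N) ℤ} (hE : E ∈ headStabilizer i)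
    {v : Fin N → ℤ} (hv : v ∈ headOrbit i) : E *ᵥ v ∈ headOrbit i := by
  obtain ⟨U, hU, rfl⟩ := hv
  exact ⟨E * U, mul_mem hE hU, (mulVec_mulVec _ _ _).symm⟩

theorem transvection_mem_headStabilizer {k l : Fin N} (hkl : k ≠ l) (hl : i ≤ l) (c : ℤ) :
    transvection k l c ∈ headStabilizer i := by
  refine ⟨Or.inl (det_transvection_of_ne k l hkl c), fun j hj => ?_⟩
  rw [transvection_mulVec, Pi.single_eq_of_ne (hj.trans_le hl).ne', mul_zero, add_zero,
    Function.update_eq_self]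

theorem mem_headOrbit_of_transvection_mulVec_mem {k l : Fin N} (hkl : k ≠ l) (hl : i ≤ l)
    {c : ℤ} {v : Fin N → ℤ} (h : transvection k l c *ᵥ v ∈ headOrbit i) : v ∈ headOrbit i := by
  simpa [mulVec_mulVec, transvection_mul_transvection_same (h := hkl)] using
    mulVec_mem_headOrbit (transvection_mem_headStabilizer hkl hl (-c)) h

/-- The witness is the identity matrix with its `i`-th column replaced by `v`; by Cramer's rule
its determinant is `v i`. -/
theorem mem_headOrbit_of_isUnit {v : Fin N → ℤ} (hv : IsUnit (v i)) : v ∈ headOrbit i := by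
  have hcol : ∀ j, updateCol 1 i v *ᵥ Pi.single j 1 = if j = i then v else Pi.single j 1 := by
    intro j
    ext r
    rw [mulVec_single_one]
    split_ifs with hj
    · simp [hj, col]
    · simp [col, hj, one_apply, Pi.single_apply, eq_comm]
  refine ⟨updateCol 1 i v, ⟨?_, fun j hj => by rw [hcol, if_neg hj.ne]⟩, by rw [hcol, if_pos rfl]⟩
  rwa [isUnimodular_iff_isUnit_det, ← cramer_apply, cramer_one]

theorem GcdTailOne.transvection_mulVec {v : Fin N → ℤ} (hv : GcdTailOne i v) {k l : Fin N}
    (hl : i ≤ l) (hkl : k ≠ l) (c : ℤ) : GcdTailOne i (transvection k l c *ᵥ v) := by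
  set w := transvection k l c *ᵥ v
  have hvw : v = transvection k l (-c) *ᵥ w := by
    simp [w, mulVec_mulVec, transvection_mul_transvection_same (h := hkl)]
  rw [GcdTailOne, ← Finset.normalize_gcd, normalize_eq_one]
  refine isUnit_of_dvd_one (hv ▸ dvd_gcd fun b hb => ?_)
  rw [hvw, Matrix.transvection_mulVec]
  rcases eq_or_ne b k with rfl | hbk
  · rw [Function.update_self]
    exact dvd_add (gcd_dvd hb) (dvd_mul_of_dvd_right (gcd_dvd (mem_Ici.2 hl)) _)
  · rw [Function.update_of_ne hbk]
    exact gcd_dvd hb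

theorem sum_natAbs_transvection_mulVec_lt {s : Finset (Fin N)} {v : Fin N → ℤ} {k l : Fin N}
    (hk : k ∈ s) (hvl : v l ≠ 0) (hle : (v l).natAbs ≤ (v k).natAbs) :
    ∑ j ∈ s, ((transvection k l (-(v k / v l)) *ᵥ v) j).natAbs < ∑ j ∈ s, (v j).natAbs := by
  have hmod : v k + -(v k / v l) * v l = v k % v l := by rw [Int.emod_def]; ring
  have hlt : (v k % v l).natAbs < (v k).natAbs := by
    have := Int.emod_lt_abs (v k) hvl
    have := Int.emod_nonneg (v k) hvl
    rw [Int.abs_eq_natAbs] at *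
    omega
  rw [transvection_mulVec, hmod]
  refine sum_lt_sum (fun j _ => ?_) ⟨k, hk, by rwa [Function.update_self]⟩
  rcases eq_or_ne j k with rfl | hjk
  · rw [Function.update_self]
    exact hlt.le
  · rw [Function.update_of_ne hjk]

theorem GcdTailOne.exists_isUnit_of_natAbs_lt {v : Fin N → ℤ} (hv : GcdTailOne i v)
    (h : ∀ k ∈ Ici i, ∀ l ∈ Ici i, k ≠ l → v l ≠ 0 → (v k).natAbs < (v l).natAbs) :
    ∃ l, i ≤ l ∧ IsUnit (v l) ∧ ∀ k, i ≤ k → k ≠ l → v k = 0 := by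
  obtain ⟨l, hl, hmax⟩ := (Ici i).exists_max_image (fun j => (v j).natAbs) nonempty_Ici
  have hzero : ∀ k, i ≤ k → k ≠ l → v k = 0 := fun k hk hkl =>
    by_contra fun hvk => (h l hl k (mem_Ici.2 hk) hkl.symm hvk).not_ge (hmax k (mem_Ici.2 hk))
  refine ⟨l, mem_Ici.1 hl, isUnit_of_dvd_one (hv ▸ dvd_gcd fun k hk => ?_), hzero⟩
  rcases eq_or_ne k l with rfl | hkl
  · rfl
  · rw [hzero k (mem_Ici.1 hk) hkl]
    exact dvd_zero _

/-- Euclid's algorithm on the entries `v j`, `j ≥ i`, with `∑_{j ≥ i} |v j|` decreasing, until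
one of them is a unit. -/
theorem mem_headOrbit_of_gcdTailOne {v : Fin N → ℤ} (hv : GcdTailOne i v) : v ∈ headOrbit i := by
  induction hμ : ∑ j ∈ Ici i, (v j).natAbs using Nat.strong_induction_on generalizing v with
  | _ n ih =>
  by_cases hpair : ∃ k ∈ Ici i, ∃ l ∈ Ici i, k ≠ l ∧ v l ≠ 0 ∧ (v l).natAbs ≤ (v k).natAbs
  · obtain ⟨k, hk, l, hl, hkl, hvl, hle⟩ := hpair
    exact mem_headOrbit_of_transvection_mulVec_mem hkl (mem_Ici.1 hl)
      (ih _ (hμ ▸ sum_natAbs_transvection_mulVec_lt hk hvl hle)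
        (hv.transvection_mulVec (mem_Ici.1 hl) hkl _) rfl)
  · push Not at hpair
    obtain ⟨l, hl, hunit, hzero⟩ := hv.exists_isUnit_of_natAbs_lt hpair
    rcases eq_or_ne i l with rfl | hil
    · exact mem_headOrbit_of_isUnit hunit
    · refine mem_headOrbit_of_transvection_mulVec_mem hil hl (c := v l)
        (mem_headOrbit_of_isUnit ?_)
      rw [transvection_mulVec, Function.update_self, hzero i le_rfl hil, zero_add]
      exact hunit.mul hunit

end HeadOrbit

theorem intQuadForm_units_smul (G : Matrix (Fin N) (Fin N) ℝ) (u : ℤˣ) (v : Fin N → ℤ) :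
    intQuadForm G ((u : ℤ) • v) = intQuadForm G v := by
  have hu : ((u : ℤ) : ℝ) * (u : ℤ) = 1 := by
    rw [← Int.cast_mul, ← Units.val_mul, Int.units_mul_self, Units.val_one, Int.cast_one]
  simp only [intQuadForm, Pi.smul_apply, smul_eq_mul, Int.cast_mul]
  rw [show (fun i => ((u : ℤ) : ℝ) * v i) = ((u : ℤ) : ℝ) • fun i => (v i : ℝ) from rfl,
    mulVec_smul, dotProduct_smul, smul_dotProduct, smul_smul, hu, one_smul]

theorem intQuadForm_single_one (H : Matrix (Fin N) (Fin N) ℝ) (i : Fin N) :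
    intQuadForm H (Pi.single i 1) = H i i := by
  simp [intQuadForm, Pi.single_apply, dotProduct, mulVec]

theorem intQuadForm_map_transpose_mul_mul (G : Matrix (Fin N) (Fin N) ℝ)
    (W : Matrix (Fin N) (Fin N) ℤ) (v : Fin N → ℤ) :
    intQuadForm ((W.map (Int.cast : ℤ → ℝ))ᵀ * G * W.map (Int.cast : ℤ → ℝ)) v =
      intQuadForm G (W *ᵥ v) := by
  have hcast : (fun r => ((W *ᵥ v) r : ℝ)) = W.map (Int.cast : ℤ → ℝ) *ᵥ fun r => (v r : ℝ) :=
    funext ((Int.castRingHom ℝ).map_mulVec W v)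
  rw [intQuadForm, intQuadForm, hcast, ← mulVec_mulVec, ← mulVec_mulVec, dotProduct_mulVec,
    vecMul_transpose]

theorem finite_setOf_intQuadForm_le {G : Matrix (Fin N) (Fin N) ℝ} (hG : G.PosDef) (B : ℝ) :
    {v : Fin N → ℤ | intQuadForm G v ≤ B}.Finite := by
  obtain ⟨c, hc, hcG⟩ := hG.exists_pos_mul_sq_norm_le
  refine ((isCompact_closedBall (0 : Fin N → ℤ) √(B / c)).finite_of_discrete).subset
    fun v hv => ?_
  rw [mem_closedBall_zero_iff, pi_norm_le_iff_of_nonneg (Real.sqrt_nonneg _)]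
  intro i
  rw [← Int.norm_cast_real]
  refine (norm_le_pi_norm (fun i => (v i : ℝ)) i).trans (Real.le_sqrt_of_sq_le ?_)
  rw [le_div_iff₀ hc, mul_comm]
  exact (hcG _).trans hv

section ColumnwiseMinimal

variable (G : Matrix (Fin N) (Fin N) ℝ)

def IsColumnwiseMinimal (Z : Matrix (Fin N) (Fin N) ℤ) : Prop :=
  IsUnimodular Z ∧ ∀ Z', IsUnimodular Z' → ∀ i, (∀ j < i, Z'.col j = Z.col j) →
    intQuadForm G (Z.col i) ≤ intQuadForm G (Z'.col i)

variable {G}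

theorem exists_isColumnwiseMinimal (hG : G.PosDef) : ∃ Z, IsColumnwiseMinimal G Z := by
  have hwf := InvImage.wf col <| Pi.Lex.wellFounded (· < · : Fin N → Fin N → Prop) fun _ =>
    wellFounded_invImage_of_finite_setOf_le (finite_setOf_intQuadForm_le hG)
  obtain ⟨Z, hZ, hmin⟩ := hwf.has_min {Z | IsUnimodular Z} ⟨1, Or.inl det_one⟩
  exact ⟨Z, hZ, fun Z' hZ' i hi => not_lt.1 fun hlt => hmin Z' hZ' ⟨i, hi, hlt⟩⟩

theorem IsColumnwiseMinimal.mul_diagonal {Z : Matrix (Fin N) (Fin N) ℤ}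
    (hZ : IsColumnwiseMinimal G Z) (ε : Fin N → ℤˣ) :
    IsColumnwiseMinimal G (Z * diagonal fun i => (ε i : ℤ)) := by
  have hD := isUnimodular_diagonal_units ε
  refine ⟨hZ.1.mul hD, fun Z' hZ' i hi => ?_⟩
  have hcols : ∀ j < i, (Z' * diagonal fun i => (ε i : ℤ)).col j = Z.col j := fun j hj => by
    rw [col_mul_diagonal, hi j hj, col_mul_diagonal, smul_smul, ← Units.val_mul,
      Int.units_mul_self, Units.val_one, one_smul]
  simpa only [col_mul_diagonal, intQuadForm_units_smul] using hZ.2 _ (hZ'.mul hD) i hcols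

theorem IsColumnwiseMinimal.le_intQuadForm {Z : Matrix (Fin N) (Fin N) ℤ}
    (hZ : IsColumnwiseMinimal G Z) {i : Fin N} {v : Fin N → ℤ} (hv : GcdTailOne i v) :
    ((Z.map (Int.cast : ℤ → ℝ))ᵀ * G * Z.map (Int.cast : ℤ → ℝ)) i i ≤
      intQuadForm ((Z.map (Int.cast : ℤ → ℝ))ᵀ * G * Z.map (Int.cast : ℤ → ℝ)) v := by
  obtain ⟨U, ⟨hU, hhead⟩, rfl⟩ := mem_headOrbit_of_gcdTailOne hv
  have hcol : ∀ j, (Z * U).col j = Z *ᵥ (U *ᵥ Pi.single j 1) := fun j => by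
    rw [← mulVec_single_one, mulVec_mulVec]
  have hcols : ∀ j < i, (Z * U).col j = Z.col j := fun j hj => by
    rw [hcol, hhead j hj, mulVec_single_one]
  rw [← intQuadForm_single_one (_ * _) i, intQuadForm_map_transpose_mul_mul,
    intQuadForm_map_transpose_mul_mul, mulVec_single_one, ← hcol]
  exact hZ.2 _ (hZ.1.mul hU) i hcols

end ColumnwiseMinimal

theorem exists_units_superdiag_nonneg (H : Matrix (Fin N) (Fin N) ℝ) :
    ∃ ε : Fin N → ℤˣ, ∀ i : Fin N, ∀ h : (i : ℕ) + 1 < N,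
      0 ≤ ((ε i : ℤ) : ℝ) * H i ⟨i + 1, h⟩ * ((ε ⟨i + 1, h⟩ : ℤ) : ℝ) := by
  let σ : ℕ → ℤˣ := fun k =>
    if h : k + 1 < N then if H ⟨k, by omega⟩ ⟨k + 1, h⟩ < 0 then -1 else 1 else 1
  refine ⟨fun j => ∏ k ∈ range j, σ k, fun i h => ?_⟩
  set e := ∏ k ∈ range i, σ k
  have he : ((e : ℤ) : ℝ) * (e : ℤ) = 1 := by
    rw [← Int.cast_mul, ← Units.val_mul, Int.units_mul_self, Units.val_one, Int.cast_one]
  have hσ : 0 ≤ ((σ i : ℤ) : ℝ) * H i ⟨i + 1, h⟩ := by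
    simp only [σ, dif_pos h]
    split_ifs <;> push_cast <;> linarith
  calc 0 ≤ ((e : ℤ) : ℝ) * (e : ℤ) * ((σ i : ℤ) * H i ⟨i + 1, h⟩) := by rwa [he, one_mul]
    _ = _ := by simp only [prod_range_succ, e, Units.val_mul, Int.cast_mul]; ring

theorem map_mul_diagonal_transpose_mul_mul_apply (G : Matrix (Fin N) (Fin N) ℝ)
    (Z : Matrix (Fin N) (Fin N) ℤ) (d : Fin N → ℤ) (a b : Fin N) :
    (((Z * diagonal d).map (Int.cast : ℤ → ℝ))ᵀ * G *
        (Z * diagonal d).map (Int.cast : ℤ → ℝ)) a b =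
      d a * ((Z.map (Int.cast : ℤ → ℝ))ᵀ * G * Z.map (Int.cast : ℤ → ℝ)) a b * d b := by
  set D := diagonal fun i => (d i : ℝ)
  have hmap : (Z * diagonal d).map (Int.cast : ℤ → ℝ) = Z.map Int.cast * D := by
    ext
    simp [D, mul_diagonal]
  rw [hmap, transpose_mul, diagonal_transpose,
    show D * (Z.map Int.cast)ᵀ * G * (Z.map Int.cast * D) =
      D * ((Z.map Int.cast)ᵀ * G * Z.map Int.cast) * D by simp only [Matrix.mul_assoc],
    mul_diagonal, diagonal_mul]

/-- every lattice has a Minkowski reduced basis: for every positive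
definite real symmetric matrix `G` there is a unimodular `Z` with
`ZᵀGZ ∈ M`. -/
theorem exists_minkowski_reduced_basis (N : ℕ)
    (G : Matrix (Fin N) (Fin N) ℝ) (hG : G.PosDef) :
    ∃ Z : Matrix (Fin N) (Fin N) ℤ, IsUnimodular Z ∧
      (Z.map (Int.cast : ℤ → ℝ))ᵀ * G * Z.map (Int.cast : ℤ → ℝ) ∈
        MinkowskiRegion N := by
  obtain ⟨Z, hZ⟩ := exists_isColumnwiseMinimal hG
  obtain ⟨ε, hε⟩ :=
    exists_units_superdiag_nonneg ((Z.map (Int.cast : ℤ → ℝ))ᵀ * G * Z.map Int.cast)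
  have hW := hZ.mul_diagonal ε
  refine ⟨_, hW.1, ?_, fun i v hv => hW.le_intQuadForm hv, fun i h => ?_⟩
  · simpa [conjTranspose_eq_transpose_of_trivial] using
      isHermitian_conjTranspose_mul_mul (Matrix.map _ Int.cast) hG.isHermitian
  · rw [map_mul_diagonal_transpose_mul_mul_apply]
    exact hε i h
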